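/- The arrow operation preserves complete reducibility candidates: if a and b are nonempty sets of Curry-style proof-terms each satisfying (CR₁), (CR₂) and (CR₃'), then a →̃ b := {π | for all μ ∈ a, π μ ∈ b} is also a nonempty set satisfying (CR₁), (CR₂) and (CR₃'). -/

import Mathlib

/-!  Minimal deduction modulo, à la Curry and à la Church.
Common infrastructure for the formalization of Cousineau,
"On completeness of reducibility candidates as a semantics of strong normalization". -/

namespace MDM

/-- First-order terms over a signature of function symbols `Fn` with arities `fnAr`.
Term-variables are natural numbers. -/
inductive Tm (Fn : Type) (fnAr : Fn → ℕ) : Type where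
  | var : ℕ → Tm Fn fnAr
  | app : (f : Fn) → (Fin (fnAr f) → Tm Fn fnAr) → Tm Fn fnAr

variable {Fn Pr : Type} {fnAr : Fn → ℕ} {prAr : Pr → ℕ}

/-- Substitution `(t/x)` on first-order terms. -/
def Tm.substT (x : ℕ) (t : Tm Fn fnAr) : Tm Fn fnAr → Tm Fn fnAr
  | .var y => if y = x then t else .var y
  | .app f a => .app f (fun i => Tm.substT x t (a i))

/-- Free term-variables of a first-order term. -/
def Tm.fv : Tm Fn fnAr → Set ℕ
  | .var y => {y}
  | .app _ a => ⋃ i, (a i).fv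

/-- Propositions of minimal deduction modulo: atomic propositions `P(t₁,…,tₙ)`,
implications `A ⇒ B` and universal quantifications `∀x.A`. -/
inductive Fm (Fn Pr : Type) (fnAr : Fn → ℕ) (prAr : Pr → ℕ) : Type where
  | atom : (P : Pr) → (Fin (prAr P) → Tm Fn fnAr) → Fm Fn Pr fnAr prAr
  | imp : Fm Fn Pr fnAr prAr → Fm Fn Pr fnAr prAr → Fm Fn Pr fnAr prAr
  | all : ℕ → Fm Fn Pr fnAr prAr → Fm Fn Pr fnAr prAr

/-- Substitution `(t/x)` on propositions (not substituting under a binder for `x`). -/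
def Fm.substT (x : ℕ) (t : Tm Fn fnAr) : Fm Fn Pr fnAr prAr → Fm Fn Pr fnAr prAr
  | .atom P a => .atom P (fun i => Tm.substT x t (a i))
  | .imp A B => .imp (Fm.substT x t A) (Fm.substT x t B)
  | .all y A => if y = x then .all y A else .all y (Fm.substT x t A)

/-- Free term-variables of a proposition. -/
def Fm.fv : Fm Fn Pr fnAr prAr → Set ℕ
  | .atom _ a => ⋃ i, (a i).fv
  | .imp A B => A.fv ∪ B.fv
  | .all y A => A.fv \ {y}

/-- An environment is a substitution from term-variables to first-order terms. -/
abbrev Env (Fn : Type) (fnAr : Fn → ℕ) : Type := ℕ → Tm Fn fnAr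

/-- Applying an environment (simultaneous term-substitution) to a term. -/
def Tm.applyEnv (φ : Env Fn fnAr) : Tm Fn fnAr → Tm Fn fnAr
  | .var y => φ y
  | .app f a => .app f (fun i => (a i).applyEnv φ)

/-- Applying an environment (simultaneous term-substitution) to a proposition. -/
def Fm.applyEnv (φ : Env Fn fnAr) : Fm Fn Pr fnAr prAr → Fm Fn Pr fnAr prAr
  | .atom P a => .atom P (fun i => (a i).applyEnv φ)
  | .imp A B => .imp (A.applyEnv φ) (B.applyEnv φ)
  | .all y A => .all y (A.applyEnv (Function.update φ y (.var y)))

/-- `φ + ⟨x,t⟩` maps `x` to `t` and agrees with `φ` elsewhere. -/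
def Env.upd (φ : Env Fn fnAr) (x : ℕ) (t : Tm Fn fnAr) : Env Fn fnAr :=
  Function.update φ x t

/-- `R` is a congruence on propositions: an equivalence relation compatible with
implication and universal quantification. -/
structure IsCongruence (R : Fm Fn Pr fnAr prAr → Fm Fn Pr fnAr prAr → Prop) : Prop where
  refl : ∀ A, R A A
  symm : ∀ {A B}, R A B → R B A
  trans : ∀ {A B C}, R A B → R B C → R A C
  imp : ∀ {A A' B B'}, R A A' → R B B' → R (.imp A B) (.imp A' B')
  all : ∀ {A A'} (x : ℕ), R A A' → R (.all x A) (.all x A')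

/-- Curry-style proof-terms: pure λ-terms with proof-variables (natural numbers). -/
inductive PTm : Type where
  | var : ℕ → PTm
  | lam : ℕ → PTm → PTm
  | app : PTm → PTm → PTm

/-- Free proof-variables of a Curry-style proof-term. -/
def PTm.fv : PTm → Set ℕ
  | .var α => {α}
  | .lam α π => π.fv \ {α}
  | .app a b => a.fv ∪ b.fv

/-- Capture-avoiding substitution `(π'/α)π` of a proof-term for a proof-variable. -/
def PTm.subst (α : ℕ) (π' : PTm) : PTm → PTm
  | .var β => if β = α then π' else .var β
  | .lam β π => if β = α then .lam β π else .lam β (PTm.subst α π' π)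
  | .app a b => .app (PTm.subst α π' a) (PTm.subst α π' b)

/-- Applying a proof-substitution `σ` to a proof-term (capture-avoiding style). -/
def PTm.psubst (σ : ℕ → PTm) : PTm → PTm
  | .var β => σ β
  | .lam β π => .lam β (π.psubst (Function.update σ β (.var β)))
  | .app a b => .app (a.psubst σ) (b.psubst σ)

/-- Substitution *with capture* `[μ/α]` of a proof-term for a proof-variable. -/
def PTm.substC (α : ℕ) (μ : PTm) : PTm → PTm
  | .var β => if β = α then μ else .var β
  | .lam β π => .lam β (PTm.substC α μ π)
  | .app a b => .app (PTm.substC α μ a) (PTm.substC α μ b)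

/-- Sequence of substitutions with capture `[μₙ/αₙ]…[μ₁/α₁]ν`. -/
def PTm.msubst (s : List (ℕ × PTm)) (ν : PTm) : PTm :=
  s.foldl (fun acc p => acc.substC p.1 p.2) ν

/-- One-step β-reduction of Curry-style proof-terms: contextual closure of
`(λα.π)π' → (π'/α)π`. -/
inductive Beta : PTm → PTm → Prop where
  | beta (α : ℕ) (π π' : PTm) : Beta (.app (.lam α π) π') (PTm.subst α π' π)
  | appL {a a' : PTm} (b : PTm) : Beta a a' → Beta (.app a b) (.app a' b)
  | appR (a : PTm) {b b' : PTm} : Beta b b' → Beta (.app a b) (.app a b')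
  | lam (α : ℕ) {π π' : PTm} : Beta π π' → Beta (.lam α π) (.lam α π')

/-- A proof-term is normal if it has no β-reduct. -/
def Normal (π : PTm) : Prop := ¬ ∃ π', Beta π π'

/-- A proof-term is neutral if it is not a λ-abstraction. -/
def Neutral (π : PTm) : Prop := ∀ (α : ℕ) (π' : PTm), π ≠ PTm.lam α π'

/-- A proof-term is strongly normalizing if there is no infinite β-reduction
sequence starting from it. -/
def SN (π : PTm) : Prop :=
  ¬ ∃ f : ℕ → PTm, f 0 = π ∧ ∀ n, Beta (f n) (f (n + 1))

/-- Typing contexts: finite lists of declarations `α : A`. -/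
abbrev Ctx (Fn Pr : Type) (fnAr : Fn → ℕ) (prAr : Pr → ℕ) : Type :=
  List (ℕ × Fm Fn Pr fnAr prAr)

/-- A well-formed typing context declares pairwise distinct proof-variables. -/
def CtxWF (Γ : Ctx Fn Pr fnAr prAr) : Prop := (Γ.map Prod.fst).Nodup

/-- Free term-variables of a typing context. -/
def ctxFV (Γ : Ctx Fn Pr fnAr prAr) : Set ℕ :=
  {x | ∃ p ∈ Γ, x ∈ Fm.fv p.2}

/-- Curry-style typing modulo the congruence `R`. -/
inductive TyC (R : Fm Fn Pr fnAr prAr → Fm Fn Pr fnAr prAr → Prop) :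
    Ctx Fn Pr fnAr prAr → PTm → Fm Fn Pr fnAr prAr → Prop where
  | ax {Γ α A B} : (α, A) ∈ Γ → R A B → TyC R Γ (.var α) B
  | impIntro {Γ α A B C π} :
      TyC R ((α, A) :: Γ) π B → R C (.imp A B) → TyC R Γ (.lam α π) C
  | impElim {Γ A B C π π'} :
      TyC R Γ π C → TyC R Γ π' A → R C (.imp A B) → TyC R Γ (.app π π') B
  | allElim {Γ A B C π x t} :
      TyC R Γ π B → R B (.all x A) → R C (A.substT x t) → TyC R Γ π C
  | allIntro {Γ A B π x} :
      TyC R Γ π A → R B (.all x A) → x ∉ ctxFV Γ → TyC R Γ π B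

/-- The theory given by `R` is strongly normalizing à la Curry. -/
def SNTheoryC (R : Fm Fn Pr fnAr prAr → Fm Fn Pr fnAr prAr → Prop) : Prop :=
  ∀ (Γ : Ctx Fn Pr fnAr prAr) (π : PTm) (A : Fm Fn Pr fnAr prAr),
    TyC R Γ π A → SN π

/-- Church-style proof-terms: λ-abstraction/application for proofs and for
first-order terms. -/
inductive CTm (Fn : Type) (fnAr : Fn → ℕ) : Type where
  | var : ℕ → CTm Fn fnAr
  | lam : ℕ → CTm Fn fnAr → CTm Fn fnAr
  | app : CTm Fn fnAr → CTm Fn fnAr → CTm Fn fnAr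
  | tlam : ℕ → CTm Fn fnAr → CTm Fn fnAr
  | tapp : CTm Fn fnAr → Tm Fn fnAr → CTm Fn fnAr

/-- Capture-avoiding substitution `(π'/α)π` on Church-style proof-terms. -/
def CTm.subst (α : ℕ) (π' : CTm Fn fnAr) : CTm Fn fnAr → CTm Fn fnAr
  | .var β => if β = α then π' else .var β
  | .lam β π => if β = α then .lam β π else .lam β (CTm.subst α π' π)
  | .app a b => .app (CTm.subst α π' a) (CTm.subst α π' b)
  | .tlam x π => .tlam x (CTm.subst α π' π)
  | .tapp a t => .tapp (CTm.subst α π' a) t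

/-- Substitution `(t/x)` of a first-order term for a term-variable in a
Church-style proof-term. -/
def CTm.substT (x : ℕ) (t : Tm Fn fnAr) : CTm Fn fnAr → CTm Fn fnAr
  | .var β => .var β
  | .lam β π => .lam β (CTm.substT x t π)
  | .app a b => .app (CTm.substT x t a) (CTm.substT x t b)
  | .tlam y π => if y = x then .tlam y π else .tlam y (CTm.substT x t π)
  | .tapp a u => .tapp (CTm.substT x t a) (Tm.substT x t u)

/-- One-step β-reduction of Church-style proof-terms: contextual closure of
`(λα.π)π' → (π'/α)π` and `(λx.π)t → (t/x)π`. -/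
inductive BetaCh : CTm Fn fnAr → CTm Fn fnAr → Prop where
  | beta (α : ℕ) (π π' : CTm Fn fnAr) :
      BetaCh (.app (.lam α π) π') (CTm.subst α π' π)
  | tbeta (x : ℕ) (π : CTm Fn fnAr) (t : Tm Fn fnAr) :
      BetaCh (.tapp (.tlam x π) t) (CTm.substT x t π)
  | appL {a a' : CTm Fn fnAr} (b : CTm Fn fnAr) :
      BetaCh a a' → BetaCh (.app a b) (.app a' b)
  | appR (a : CTm Fn fnAr) {b b' : CTm Fn fnAr} :
      BetaCh b b' → BetaCh (.app a b) (.app a b')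
  | lam (α : ℕ) {π π' : CTm Fn fnAr} :
      BetaCh π π' → BetaCh (.lam α π) (.lam α π')
  | tlam (x : ℕ) {π π' : CTm Fn fnAr} :
      BetaCh π π' → BetaCh (.tlam x π) (.tlam x π')
  | tapp {a a' : CTm Fn fnAr} (t : Tm Fn fnAr) :
      BetaCh a a' → BetaCh (.tapp a t) (.tapp a' t)

/-- Strong normalization for Church-style proof-terms. -/
def SNCh (π : CTm Fn fnAr) : Prop :=
  ¬ ∃ f : ℕ → CTm Fn fnAr, f 0 = π ∧ ∀ n, BetaCh (f n) (f (n + 1))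

/-- Church-style typing modulo the congruence `R`. -/
inductive TyCh (R : Fm Fn Pr fnAr prAr → Fm Fn Pr fnAr prAr → Prop) :
    Ctx Fn Pr fnAr prAr → CTm Fn fnAr → Fm Fn Pr fnAr prAr → Prop where
  | ax {Γ α A B} : (α, A) ∈ Γ → R A B → TyCh R Γ (.var α) B
  | impIntro {Γ α A B C π} :
      TyCh R ((α, A) :: Γ) π B → R C (.imp A B) → TyCh R Γ (.lam α π) C
  | impElim {Γ A B C π π'} :
      TyCh R Γ π C → TyCh R Γ π' A → R C (.imp A B) → TyCh R Γ (.app π π') B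
  | allElim {Γ A B C π x t} :
      TyCh R Γ π B → R B (.all x A) → R C (A.substT x t) →
      TyCh R Γ (.tapp π t) C
  | allIntro {Γ A B π x} :
      TyCh R Γ π A → R B (.all x A) → x ∉ ctxFV Γ → TyCh R Γ (.tlam x π) B

/-- The theory given by `R` is strongly normalizing à la Church. -/
def SNTheoryCh (R : Fm Fn Pr fnAr prAr → Fm Fn Pr fnAr prAr → Prop) : Prop :=
  ∀ (Γ : Ctx Fn Pr fnAr prAr) (π : CTm Fn fnAr) (A : Fm Fn Pr fnAr prAr),
    TyCh R Γ π A → SNCh π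

/-- A theory is non-confusing if it never identifies an implication with a
universally quantified proposition. -/
def NonConfusing (R : Fm Fn Pr fnAr prAr → Fm Fn Pr fnAr prAr → Prop) : Prop :=
  ¬ ∃ (A B C : Fm Fn Pr fnAr prAr) (x : ℕ), R (.imp A B) (.all x C)

/-- (CR₁): all elements are strongly normalizing. -/
def CR1 (E : Set PTm) : Prop := ∀ π ∈ E, SN π

/-- (CR₂): closure under one-step β-reduction. -/
def CR2 (E : Set PTm) : Prop := ∀ π ∈ E, ∀ π', Beta π π' → π' ∈ E

/-- (CR₃'): simultaneous neutral non-normal expansions. -/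
def CR3' (E : Set PTm) : Prop :=
  ∀ (n : ℕ) (ν : PTm) (αs : Fin n → ℕ) (μs : Fin n → PTm),
    (∀ i, Neutral (μs i) ∧ ¬ Normal (μs i)) →
    (∀ ρs : Fin n → PTm, (∀ i, Beta (μs i) (ρs i)) →
      PTm.msubst (List.ofFn fun i => (αs i, ρs i)) ν ∈ E) →
    PTm.msubst (List.ofFn fun i => (αs i, μs i)) ν ∈ E

/-- A complete reducibility candidate (element of 𝒞'): a nonempty set of
Curry-style proof-terms satisfying (CR₁), (CR₂) and (CR₃'). -/
def isCand (E : Set PTm) : Prop := E.Nonempty ∧ CR1 E ∧ CR2 E ∧ CR3' E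

/-- `a →̃ b := {π | ∀ μ ∈ a, π μ ∈ b}`. -/
def Arrow (a b : Set PTm) : Set PTm := {π | ∀ μ ∈ a, PTm.app π μ ∈ b}

/-- A 𝒞'-valued model of the theory given by the congruence `R`. -/
structure CModel {Fn Pr : Type} {fnAr : Fn → ℕ} {prAr : Pr → ℕ}
    (R : Fm Fn Pr fnAr prAr → Fm Fn Pr fnAr prAr → Prop) : Type where
  interp : Fm Fn Pr fnAr prAr → Env Fn fnAr → Set PTm
  cand : ∀ A φ, isCand (interp A φ)
  imp_eq : ∀ A B φ, interp (.imp A B) φ = Arrow (interp A φ) (interp B φ)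
  all_eq : ∀ (x : ℕ) A φ,
      interp (.all x A) φ = ⋂ t : Tm Fn fnAr, interp A (φ.upd x t)
  subst_eq : ∀ A (x : ℕ) (t : Tm Fn fnAr) φ,
      interp (A.substT x t) φ = interp A (φ.upd x t)
  congr_eq : ∀ A B φ, R A B → interp A φ = interp B φ

/-- `δ` describes the universal context Δ: it declares each proof-variable with a
proposition, and for each proposition there are infinitely many proof-variables
declared with it. -/
def UniversalDelta (δ : ℕ → Fm Fn Pr fnAr prAr) : Prop :=
  ∀ A : Fm Fn Pr fnAr prAr, {α : ℕ | δ α = A}.Infinite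

/-- `Δ ⊢ π : B`: the proof-term `π` has type `B` in some finite part of the
universal context Δ described by `δ`. -/
def DeltaTy (R : Fm Fn Pr fnAr prAr → Fm Fn Pr fnAr prAr → Prop)
    (δ : ℕ → Fm Fn Pr fnAr prAr) (π : PTm) (B : Fm Fn Pr fnAr prAr) : Prop :=
  ∃ Γ : Ctx Fn Pr fnAr prAr, (∀ p ∈ Γ, p.2 = δ p.1) ∧ TyC R Γ π B

/-- The iterated closure `Cl^k(A)_φ`. -/
def ClK (R : Fm Fn Pr fnAr prAr → Fm Fn Pr fnAr prAr → Prop)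
    (δ : ℕ → Fm Fn Pr fnAr prAr) :
    ℕ → Fm Fn Pr fnAr prAr → Env Fn fnAr → Set PTm
  | 0, A, φ => {π | DeltaTy R δ π (A.applyEnv φ)}
  | k + 1, A, φ =>
      {π | ∃ (n : ℕ) (ν : PTm) (αs : Fin n → ℕ) (μs : Fin n → PTm),
        (∀ i, SN (μs i) ∧ Neutral (μs i) ∧ ¬ Normal (μs i)) ∧
        π = PTm.msubst (List.ofFn fun i => (αs i, μs i)) ν ∧
        ∀ ρs : Fin n → PTm, (∀ i, Beta (μs i) (ρs i)) →
          PTm.msubst (List.ofFn fun i => (αs i, ρs i)) ν ∈ ClK R δ k A φ}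

/-- The closure `Cl(A)_φ = ⋃ₖ Cl^k(A)_φ`. -/
def Cl (R : Fm Fn Pr fnAr prAr → Fm Fn Pr fnAr prAr → Prop)
    (δ : ℕ → Fm Fn Pr fnAr prAr) (A : Fm Fn Pr fnAr prAr) (φ : Env Fn fnAr) :
    Set PTm :=
  ⋃ k : ℕ, ClK R δ k A φ

/-! ### Auxiliary lemmas for Statement 7 -/

section Aux

lemma sn_acc {π : PTm} (h : SN π) : Acc (fun x y => Beta y x) π := by
  by_contra hacc
  have key : ∀ y : PTm, ¬ Acc (fun x y => Beta y x) y →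
      ∃ z, Beta y z ∧ ¬ Acc (fun x y => Beta y x) z := by
    intro y hy
    by_contra hc
    push_neg at hc
    exact hy (Acc.intro y fun z hz => hc z hz)
  let g : ℕ → {y : PTm // ¬ Acc (fun x y => Beta y x) y} :=
    fun n => Nat.rec ⟨π, hacc⟩
      (fun _ p => ⟨(key p.1 p.2).choose, (key p.1 p.2).choose_spec.2⟩) n
  exact h ⟨fun n => (g n).1, rfl, fun n => (key (g n).1 (g n).2).choose_spec.1⟩

lemma beta_var {x : ℕ} {t : PTm} : ¬ Beta (.var x) t := by
  intro h; cases h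

/-- A bound on all the variables (free or bound) of a proof-term. -/
def vb : PTm → ℕ
  | .var x => x + 1
  | .lam x p => max (x + 1) (vb p)
  | .app u v => max (vb u) (vb v)

lemma vb_subst (α : ℕ) (u t : PTm) :
    vb (PTm.subst α u t) ≤ max (vb t) (vb u) := by
  induction t with
  | var β =>
    simp only [PTm.subst]
    split
    · exact le_max_right _ _
    · exact le_max_left _ _
  | lam β p ih =>
    simp only [PTm.subst]
    split
    · exact le_max_left _ _
    · simp only [vb] at ih ⊢
      omega
  | app s t ihs iht =>
    simp only [PTm.subst, vb] at ihs iht ⊢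
    omega

lemma vb_beta {t t' : PTm} (h : Beta t t') : vb t' ≤ vb t := by
  induction h with
  | beta α π π' =>
    have := vb_subst α π' π
    simp only [vb] at this ⊢
    omega
  | appL b _ ih => simp only [vb] at ih ⊢; omega
  | appR a _ ih => simp only [vb] at ih ⊢; omega
  | lam α _ ih => simp only [vb] at ih ⊢; omega

lemma substC_vb {α : ℕ} {u t : PTm} (h : vb t ≤ α) :
    PTm.substC α u t = t := by
  induction t with
  | var β =>
    simp only [vb] at h
    simp only [PTm.substC]
    rw [if_neg (by omega)]
  | lam β p ih =>
    simp only [vb, max_le_iff] at h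
    simp only [PTm.substC]
    rw [ih h.2]
  | app s t ihs iht =>
    simp only [vb, max_le_iff] at h
    simp only [PTm.substC]
    rw [ihs h.1, iht h.2]

lemma subst_vb {α : ℕ} {u t : PTm} (h : vb t ≤ α) :
    PTm.subst α u t = t := by
  induction t with
  | var β =>
    simp only [vb] at h
    simp only [PTm.subst]
    rw [if_neg (by omega)]
  | lam β p ih =>
    simp only [vb, max_le_iff] at h
    simp only [PTm.subst]
    split
    · rfl
    · rw [ih h.2]
  | app s t ihs iht =>
    simp only [vb, max_le_iff] at h
    simp only [PTm.subst]
    rw [ihs h.1, iht h.2]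

lemma substC_self (α : ℕ) (t : PTm) : PTm.substC α (.var α) t = t := by
  induction t with
  | var β =>
    simp only [PTm.substC]
    split
    · rename_i h; rw [h]
    · rfl
  | lam β p ih => simp only [PTm.substC]; rw [ih]
  | app s t ihs iht => simp only [PTm.substC]; rw [ihs, iht]

lemma msubst_concat (s : List (ℕ × PTm)) (p : ℕ × PTm) (t : PTm) :
    PTm.msubst (s ++ [p]) t = PTm.substC p.1 (PTm.msubst s t) p.2 := by
  simp [PTm.msubst, List.foldl_append]

lemma msubst_ofFn_snoc {n : ℕ} (αs : Fin n → ℕ) (γ : ℕ)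
    (τs : Fin (n + 1) → PTm) (ν : PTm) :
    PTm.msubst (List.ofFn fun i => ((Fin.snoc αs γ : Fin (n + 1) → ℕ) i, τs i)) ν =
      PTm.substC γ
        (PTm.msubst (List.ofFn fun i => (αs i, τs i.castSucc)) ν)
        (τs (Fin.last n)) := by
  rw [List.ofFn_succ']
  simp only [Fin.snoc_castSucc, Fin.snoc_last]
  rw [List.concat_eq_append, msubst_concat]

/-- (CR₃') implies the usual (CR₃) restricted to non-normal neutral terms. -/
lemma cr3_nn {E : Set PTm} (hE : CR3' E) {M : PTm} (hneu : Neutral M)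
    (hnn : ¬ Normal M) (h : ∀ ρ, Beta M ρ → ρ ∈ E) : M ∈ E := by
  have := hE 1 (.var 0) (fun _ => 0) (fun _ => M) (fun _ => ⟨hneu, hnn⟩)
    (fun ρs hρs => by
      simpa [PTm.msubst, List.ofFn_succ, substC_self] using h (ρs 0) (hρs 0))
  simpa [PTm.msubst, List.ofFn_succ, substC_self] using this

/-- The identity combinator. -/
def idc : PTm := .lam 0 (.var 0)

lemma beta_idc_app (X : PTm) : Beta (.app idc X) X := by
  have := Beta.beta 0 (.var 0) X
  simpa [PTm.subst, idc] using this

lemma idc_no_beta {t : PTm} : ¬ Beta idc t := by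
  intro h
  cases h with
  | lam α h' => exact beta_var h'

lemma beta_idc_app_inv {X τ : PTm} (h : Beta (.app idc X) τ) :
    τ = X ∨ ∃ X', Beta X X' ∧ τ = .app idc X' := by
  cases h with
  | beta α π π' => left; simp [PTm.subst]
  | appL b h' => exact absurd h' idc_no_beta
  | appR a h' => exact Or.inr ⟨_, h', rfl⟩

lemma neutral_app (u v : PTm) : Neutral (.app u v) := by
  intro α π' h
  exact PTm.noConfusion h

lemma not_normal_of_beta {t t' : PTm} (h : Beta t t') : ¬ Normal t :=
  fun hn => hn ⟨t', h⟩

/-- `idc · μ₀` is in any candidate containing `μ₀`. -/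
lemma idc_app_mem {a : Set PTm} (ha2 : CR2 a) (ha3 : CR3' a)
    {μ₀ : PTm} (hacc : Acc (fun x y => Beta y x) μ₀) (hμ₀ : μ₀ ∈ a) :
    PTm.app idc μ₀ ∈ a := by
  induction hacc with
  | intro μ₀ h ih =>
    apply cr3_nn ha3 (neutral_app _ _) (not_normal_of_beta (beta_idc_app μ₀))
    intro ρ hρ
    rcases beta_idc_app_inv hρ with rfl | ⟨X', hX', rfl⟩
    · exact hμ₀
    · exact ih X' hX' (ha2 μ₀ hμ₀ X' hX')

lemma lam_beta_inv {γ : ℕ} {p t : PTm} (h : Beta (.lam γ p) t) :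
    ∃ p', Beta p p' ∧ t = .lam γ p' := by
  cases h with
  | lam α h' => exact ⟨_, h', rfl⟩

lemma sn_of_sn_appL {u v : PTm} (h : SN (.app u v)) : SN u := by
  rintro ⟨f, hf0, hfs⟩
  exact h ⟨fun n => .app (f n) v, by simp [hf0], fun n => Beta.appL v (hfs n)⟩

/-- Reducts of `(var γ) ((λx.x) μ₀)`. -/
lemma beta_W_inv {γ : ℕ} {μ₀ σ : PTm}
    (h : Beta (.app (.var γ) (.app idc μ₀)) σ) :
    σ = .app (.var γ) μ₀ ∨
      ∃ μ₀', Beta μ₀ μ₀' ∧ σ = .app (.var γ) (.app idc μ₀') := by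
  cases h with
  | appL b h' => exact absurd h' beta_var
  | appR a h' =>
    rcases beta_idc_app_inv h' with rfl | ⟨X', hX', rfl⟩
    · exact Or.inl rfl
    · exact Or.inr ⟨X', hX', rfl⟩

end Aux

/-- the arrow operation preserves complete reducibility candidates. -/
theorem arrow_isCand (a b : Set PTm) (ha : isCand a) (hb : isCand b) :
    isCand (Arrow a b) := by
  obtain ⟨⟨π₀a, hπ₀a⟩, ha1, ha2, ha3⟩ := ha
  obtain ⟨⟨π₀b, hπ₀b⟩, hb1, hb2, hb3⟩ := hb
  have cr2 : CR2 (Arrow a b) := by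
    intro π hπ π' hβ μ hμ
    exact hb2 _ (hπ μ hμ) _ (Beta.appL μ hβ)
  refine ⟨?_, ?_, cr2, ?_⟩
  · -- Nonempty
    refine ⟨.lam (vb π₀b) π₀b, ?_⟩
    have main : ∀ π, Acc (fun x y => Beta y x) π → π ∈ b → vb π ≤ vb π₀b →
        ∀ μ₀, Acc (fun x y => Beta y x) μ₀ → μ₀ ∈ a →
        PTm.app (.lam (vb π₀b) π) μ₀ ∈ b := by
      intro π haccπ
      induction haccπ with
      | intro π hπ ihπ =>
        intro hπb hvb μ₀ haccμ
        induction haccμ with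
        | intro μ₀ hμ ihμ =>
          intro hμ₀
          have hstep : Beta (PTm.app (.lam (vb π₀b) π) μ₀) π := by
            have := Beta.beta (vb π₀b) π μ₀
            rwa [subst_vb hvb] at this
          apply cr3_nn hb3 (neutral_app _ _) (not_normal_of_beta hstep)
          intro ρ hρ
          cases hρ with
          | beta α p p' => rwa [subst_vb hvb]
          | appL v h' =>
            obtain ⟨p', hp', rfl⟩ := lam_beta_inv h'
            exact ihπ p' hp' (hb2 π hπb _ hp') (le_trans (vb_beta hp') hvb)
              μ₀ (Acc.intro μ₀ hμ) hμ₀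
          | appR u h' =>
            exact ihμ _ h' (ha2 μ₀ hμ₀ _ h')
    intro μ₀ hμ₀
    exact main π₀b (sn_acc (hb1 _ hπ₀b)) hπ₀b le_rfl μ₀ (sn_acc (ha1 _ hμ₀)) hμ₀
  · -- CR1
    intro π hπ
    exact sn_of_sn_appL (hb1 _ (hπ π₀a hπ₀a))
  · -- CR3'
    intro n ν αs μs hneu H
    intro μ₀ hμ₀
    set γ : ℕ := max (vb μ₀) 1 with hγdef
    have hγμ : vb μ₀ ≤ γ := le_max_left _ _
    have hγ1 : 1 ≤ γ := le_max_right _ _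
    have hWstep : Beta (PTm.app (.var γ) (.app idc μ₀)) (.app (.var γ) μ₀) :=
      Beta.appR _ (beta_idc_app μ₀)
    have hsubC : ∀ (C X : PTm), vb X ≤ γ →
        PTm.substC γ C (.app (.var γ) (.app idc X)) = .app C (.app idc X) := by
      intro C X hX
      simp only [PTm.substC, idc, if_true, eq_self_iff_true]
      rw [if_neg (by omega : ¬ (0 : ℕ) = γ), substC_vb hX]
    have happ := hb3 (n + 1) ν (Fin.snoc αs γ)
      (Fin.snoc μs (.app (.var γ) (.app idc μ₀))) ?_ ?_
    · rw [msubst_ofFn_snoc] at happ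
      simp only [Fin.snoc_castSucc, Fin.snoc_last] at happ
      rw [hsubC _ _ hγμ] at happ
      exact hb2 _ happ _ (Beta.appR _ (beta_idc_app μ₀))
    · -- neutral / non-normal
      intro i
      refine Fin.lastCases ?_ ?_ i
      · simp only [Fin.snoc_last]
        exact ⟨neutral_app _ _, not_normal_of_beta hWstep⟩
      · intro j
        simp only [Fin.snoc_castSucc]
        exact hneu j
    · -- the expansion hypothesis
      intro τs hτ
      rw [msubst_ofFn_snoc]
      have hρ : ∀ i : Fin n, Beta (μs i) (τs i.castSucc) := by
        intro i
        have := hτ i.castSucc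
        rwa [Fin.snoc_castSucc] at this
      have hC := H (fun i => τs i.castSucc) hρ
      have hσ : Beta (PTm.app (.var γ) (.app idc μ₀)) (τs (Fin.last n)) := by
        have := hτ (Fin.last n)
        rwa [Fin.snoc_last] at this
      rcases beta_W_inv hσ with hσe | ⟨μ₀', hβ', hσe⟩
      · rw [hσe]
        simp only [PTm.substC, if_true, eq_self_iff_true]
        rw [substC_vb hγμ]
        exact hC μ₀ hμ₀
      · rw [hσe, hsubC _ _ (le_trans (vb_beta hβ') hγμ)]
        have hμ₀' : μ₀' ∈ a := ha2 μ₀ hμ₀ _ hβ'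
        exact hC _ (idc_app_mem ha2 ha3 (sn_acc (ha1 _ hμ₀')) hμ₀')

end MDM
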